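/- arXiv:1810.02266 — 2 statements merged into one kernel-verified Lean document; each statement's English description precedes it below -/
import Mathlib

section
/- Let 𝒳 be a measurable space, let P₀ and P₁ be probability measures on 𝒳, let α ∈ (0,1), and define μ = α·(P₀ ⊗ P₀) + (1 − α)·(P₁ ⊗ P₁) on 𝒳 × 𝒳 with common marginal m = α·P₀ + (1 − α)·P₁. If μ = m ⊗ m (i.e., the two coordinates are independent under μ), then P₀ = P₁. Equivalently: if consecutive observations of the stream are independent, then there is no concept drift. -/
/-!
Evaluate both sides of `μ = m ⊗ m` on a square `s ×ˢ s`: with `a = P₀ s`, `b = P₁ s` this gives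
`α a² + (1 - α) b² = (α a + (1 - α) b)²`, and the difference of the two sides is the variance
`α (1 - α) (a - b)²` of the two-point law putting mass `α` on `a` and `1 - α` on `b`.
Since `0 < α < 1`, it vanishes only if `a = b`.
-/

open MeasureTheory
open scoped ENNReal

lemma eq_of_convex_comb_sq_eq_sq_convex_comb {t x y : ℝ} (ht₀ : 0 < t) (ht₁ : t < 1)
    (h : t * x ^ 2 + (1 - t) * y ^ 2 = (t * x + (1 - t) * y) ^ 2) : x = y := by
  have hvar : t * (1 - t) * (x - y) ^ 2 = 0 := by linear_combination h
  have ht : t * (1 - t) ≠ 0 := (mul_pos ht₀ (sub_pos.mpr ht₁)).ne'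
  simpa [ht, sub_eq_zero] using hvar

lemma ENNReal.eq_of_convex_comb_sq_eq_sq_convex_comb {α a b : ℝ≥0∞} (hα₀ : 0 < α) (hα₁ : α < 1)
    (ha : a ≠ ∞) (hb : b ≠ ∞)
    (h : α * a ^ 2 + (1 - α) * b ^ 2 = (α * a + (1 - α) * b) ^ 2) : a = b := by
  have hα : α ≠ ∞ := hα₁.ne_top
  have h1α : (1 - α).toReal = 1 - α.toReal := by
    rw [ENNReal.toReal_sub_of_le hα₁.le ENNReal.one_ne_top, ENNReal.toReal_one]
  have hreal := congrArg ENNReal.toReal h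
  rw [ENNReal.toReal_add (by finiteness) (by finiteness), ENNReal.toReal_pow,
    ENNReal.toReal_add (by finiteness) (by finiteness)] at hreal
  simp only [ENNReal.toReal_mul, ENNReal.toReal_pow, h1α] at hreal
  refine (ENNReal.toReal_eq_toReal_iff' ha hb).mp
    (_root_.eq_of_convex_comb_sq_eq_sq_convex_comb (ENNReal.toReal_pos hα₀.ne' hα) ?_ hreal)
  simpa using (ENNReal.toReal_lt_toReal hα ENNReal.one_ne_top).mpr hα₁

lemma eq_of_mixture_prod_self_eq_prod_self_mixture {𝒳 : Type*} [MeasurableSpace 𝒳]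
    {P₀ P₁ : Measure 𝒳} [IsFiniteMeasure P₀] [IsFiniteMeasure P₁] {α : ℝ≥0∞}
    (hα₀ : 0 < α) (hα₁ : α < 1)
    (h : α • P₀.prod P₀ + (1 - α) • P₁.prod P₁ =
      (α • P₀ + (1 - α) • P₁).prod (α • P₀ + (1 - α) • P₁)) :
    P₀ = P₁ := by
  ext s -
  have hs := congrArg (fun ν : Measure (𝒳 × 𝒳) ↦ ν (s ×ˢ s)) h
  simp only [Measure.prod_prod, ← sq, Measure.add_apply, Measure.smul_apply,
    smul_eq_mul] at hs
  exact ENNReal.eq_of_convex_comb_sq_eq_sq_convex_comb hα₀ hα₁ (measure_ne_top P₀ s)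
    (measure_ne_top P₁ s) hs

/-- Contrapositive form of "concept drift implies temporal dependence": if the joint
law `μ = α•(P₀⊗P₀) + (1-α)•(P₁⊗P₁)` of two consecutive observations equals the
product `m ⊗ m` of its common marginal `m = α•P₀ + (1-α)•P₁` (i.e., the observations
are independent), then `P₀ = P₁`, i.e., there is no concept drift. -/
theorem independence_implies_no_drift
    {𝒳 : Type*} [MeasurableSpace 𝒳]
    (P₀ P₁ : Measure 𝒳) [IsProbabilityMeasure P₀] [IsProbabilityMeasure P₁]
    (α : ℝ≥0∞) (hα : 0 < α) (hα1 : α < 1)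
    (μ : Measure (𝒳 × 𝒳)) (hμ : μ = α • (P₀.prod P₀) + (1 - α) • (P₁.prod P₁))
    (m : Measure 𝒳) (hm : m = α • P₀ + (1 - α) • P₁)
    (hindep : μ = m.prod m) :
    P₀ = P₁ := by
  subst hμ hm
  exact eq_of_mixture_prod_self_eq_prod_self_mixture hα hα1 hindep
end

section
/- Let 𝒳 and 𝒴 be measurable spaces, let P₀ and P₁ be probability measures on 𝒳 with P₀ ≠ P₁, let α ∈ (0,1), and let μ = α·(P₀ ⊗ P₀) + (1 − α)·(P₁ ⊗ P₁) be the joint law of two consecutive inputs (X_{t−1}, X_t). Let κ : 𝒳 → 𝒴 be a Markov kernel giving the conditional law of the label Y_t given X_t (not depending on the concept). Let ν be the resulting joint law of (X_{t−1}, (X_t, Y_t)) on 𝒳 × (𝒳 × 𝒴), obtained by composing μ in its second coordinate with κ. Then ν is not equal to the product of its first marginal (the law of X_{t−1}) with its second marginal (the law of (X_t, Y_t)); i.e., X_{t−1} and (X_t, Y_t) are not independent. -/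
/-!
If `ν` were a product, every rectangle would satisfy
`ν(A × B) · ν(univ) = ν(A × univ) · ν(univ × B)`.
Since `κ` is Markov, the label marginalises out and `ν(s × (t × univ)) = μ(s × t)`, so taking
`B = A × univ` with `a = P₀ A ≠ b = P₁ A` would give `α a² + (1 - α) b² = (α a + (1 - α) b)²`,
contradicting the strict convexity of `x ↦ x²`.
-/

open MeasureTheory ProbabilityTheory
open scoped ENNReal

theorem ENNReal.sq_convex_comb_lt {α a b : ℝ≥0∞} (hα : 0 < α) (hα1 : α < 1)
    (ha : a ≠ ∞) (hb : b ≠ ∞) (hab : a ≠ b) :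
    (α * a + (1 - α) * b) ^ 2 < α * a ^ 2 + (1 - α) * b ^ 2 := by
  lift α to NNReal using hα1.ne_top
  lift a to NNReal using ha
  lift b to NNReal using hb
  rw [← ENNReal.coe_one, ← ENNReal.coe_sub]
  norm_cast at *
  rw [← NNReal.coe_lt_coe]
  have hα1' : (α : ℝ) < 1 := hα1
  have hab' : (a : ℝ) ≠ b := fun h => hab (NNReal.coe_injective h)
  push_cast [NNReal.coe_sub hα1.le]
  have : 0 < (α : ℝ) * (1 - α) * ((a : ℝ) - b) ^ 2 := by
    have := sub_ne_zero.mpr hab'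
    positivity
  nlinarith

theorem MeasureTheory.Measure.prod_apply_prod_mul_measure_univ {α β : Type*}
    [MeasurableSpace α] [MeasurableSpace β]
    (m₁ : Measure α) (m₂ : Measure β) [SFinite m₂] (s : Set α) (t : Set β) :
    m₁.prod m₂ (s ×ˢ t) * m₁.prod m₂ Set.univ
      = m₁.prod m₂ (s ×ˢ Set.univ) * m₁.prod m₂ (Set.univ ×ˢ t) := by
  simp only [← Set.univ_prod_univ, Measure.prod_prod]
  ring

theorem MeasureTheory.Measure.map_prodAssoc_compProd_apply_prod_univ {α β γ : Type*}
    [MeasurableSpace α] [MeasurableSpace β] [MeasurableSpace γ] (μ : Measure (α × β)) [SFinite μ]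
    (η : Kernel (α × β) γ) [IsMarkovKernel η] {s : Set α} {t : Set β}
    (hs : MeasurableSet s) (ht : MeasurableSet t) :
    (μ ⊗ₘ η).map MeasurableEquiv.prodAssoc (s ×ˢ (t ×ˢ Set.univ)) = μ (s ×ˢ t) := by
  have hpre : MeasurableEquiv.prodAssoc ⁻¹' (s ×ˢ (t ×ˢ Set.univ)) =
      (Prod.fst ⁻¹' (s ×ˢ t) : Set ((α × β) × γ)) := by
    ext ⟨⟨a, b⟩, c⟩; simp [MeasurableEquiv.prodAssoc]
  rw [Measure.map_apply MeasurableEquiv.prodAssoc.measurable (hs.prod (ht.prod .univ)), hpre,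
    ← Measure.fst_apply (hs.prod ht), Measure.fst_compProd]

section Mixture

variable {𝒳 : Type*} [MeasurableSpace 𝒳]

noncomputable def iidMixture (α : ℝ≥0∞) (P₀ P₁ : Measure 𝒳) : Measure (𝒳 × 𝒳) :=
  α • P₀.prod P₀ + (1 - α) • P₁.prod P₁

instance (α : ℝ≥0∞) (P₀ P₁ : Measure 𝒳) [SFinite P₀] [SFinite P₁] :
    SFinite (iidMixture α P₀ P₁) := by
  unfold iidMixture; infer_instance

theorem iidMixture_apply_prod (α : ℝ≥0∞) (P₀ P₁ : Measure 𝒳) [SFinite P₀] [SFinite P₁]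
    (s t : Set 𝒳) :
    iidMixture α P₀ P₁ (s ×ˢ t) = α * (P₀ s * P₀ t) + (1 - α) * (P₁ s * P₁ t) := by
  simp [iidMixture, Measure.prod_prod]

theorem iidMixture_apply_prod_mul_measure_univ_ne {α : ℝ≥0∞} (hα : 0 < α) (hα1 : α < 1)
    (P₀ P₁ : Measure 𝒳) [IsProbabilityMeasure P₀] [IsProbabilityMeasure P₁] {A : Set 𝒳}
    (hA : P₀ A ≠ P₁ A) :
    iidMixture α P₀ P₁ (A ×ˢ A) * iidMixture α P₀ P₁ Set.univ
      ≠ iidMixture α P₀ P₁ (A ×ˢ Set.univ) * iidMixture α P₀ P₁ (Set.univ ×ˢ A) := by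
  rw [← Set.univ_prod_univ]
  simp only [iidMixture_apply_prod, measure_univ, one_pow, mul_one, one_mul,
    add_tsub_cancel_of_le hα1.le, ← sq]
  exact (ENNReal.sq_convex_comb_lt hα hα1 (measure_ne_top _ _) (measure_ne_top _ _) hA).ne'

end Mixture

/-- Under concept drift, the previous input `X_{t-1}` and the current input/label pair
`(X_t, Y_t)` are not independent: with `(X_{t-1}, X_t)` having mixture joint law
`μ = α•(P₀⊗P₀) + (1-α)•(P₁⊗P₁)` (`P₀ ≠ P₁`) and the label generated from the current
input by a Markov kernel `κ`, the resulting joint law `ν` on `𝒳 × (𝒳 × 𝒴)` is not the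
product of its two marginals. -/
theorem drift_label_joint_not_product
    {𝒳 𝒴 : Type*} [MeasurableSpace 𝒳] [MeasurableSpace 𝒴]
    (P₀ P₁ : Measure 𝒳) [IsProbabilityMeasure P₀] [IsProbabilityMeasure P₁]
    (hne : P₀ ≠ P₁) (α : ℝ≥0∞) (hα : 0 < α) (hα1 : α < 1)
    (μ : Measure (𝒳 × 𝒳)) (hμ : μ = α • (P₀.prod P₀) + (1 - α) • (P₁.prod P₁))
    (κ : Kernel 𝒳 𝒴) [IsMarkovKernel κ]
    (ν : Measure (𝒳 × (𝒳 × 𝒴)))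
    (hν : ν = (μ ⊗ₘ (κ.comap Prod.snd measurable_snd)).map MeasurableEquiv.prodAssoc) :
    ν ≠ ν.fst.prod ν.snd := by
  obtain ⟨A, hA, hPA⟩ : ∃ A, MeasurableSet A ∧ P₀ A ≠ P₁ A := by
    by_contra! h
    exact hne (Measure.ext h)
  change μ = iidMixture α P₀ P₁ at hμ
  subst hμ
  have : SFinite ν := hν ▸ inferInstance
  have hrect {s t : Set 𝒳} (hs : MeasurableSet s) (ht : MeasurableSet t) :
      ν (s ×ˢ (t ×ˢ Set.univ)) = iidMixture α P₀ P₁ (s ×ˢ t) :=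
    hν ▸ Measure.map_prodAssoc_compProd_apply_prod_univ _ _ hs ht
  intro h
  have hprod := Measure.prod_apply_prod_mul_measure_univ ν.fst ν.snd A (A ×ˢ Set.univ)
  have hA_univ := hrect hA .univ
  have huniv := hrect .univ .univ
  simp only [Set.univ_prod_univ] at hA_univ huniv
  rw [← h, hrect hA hA, hrect .univ hA, hA_univ, huniv] at hprod
  exact iidMixture_apply_prod_mul_measure_univ_ne hα hα1 P₀ P₁ hPA hprod
end
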